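/- arXiv:2004.00447 — 6 statements merged into one kernel-verified Lean document; each statement's English description precedes it below -/
import Mathlib

section
/- Let X be an invertible n×n matrix over a field F. Then the block matrix diag(X, X⁻¹) of size 2n admits the factorization diag(X, X⁻¹) = [[1, -X],[0, 1]] · [[1, 0],[X⁻¹, 1]] · [[1, 1-X],[0, 1]] · [[1, 0],[-1, 1]] · [[1, 1],[0, 1]], where each block is n×n and 1 denotes the n×n identity matrix. -/
open Matrix

/-- factorization of `diag(X, X⁻¹)` into elementary block matrices. -/
theorem stmt_0 {F : Type*} [Field F] (n : ℕ) (X : Matrix (Fin n) (Fin n) F)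
    (hX : IsUnit X) :
    fromBlocks X 0 0 X⁻¹ =
      fromBlocks 1 (-X) 0 1 * fromBlocks 1 0 X⁻¹ 1 * fromBlocks 1 (1 - X) 0 1 *
        fromBlocks 1 0 (-1) 1 * fromBlocks 1 1 0 1 := by
  have h1 : X * X⁻¹ = 1 := mul_nonsing_inv X ((isUnit_iff_isUnit_det X).mp hX)
  have h2 : X⁻¹ * X = 1 := nonsing_inv_mul X ((isUnit_iff_isUnit_det X).mp hX)
  simp only [fromBlocks_multiply]
  congr 1 <;> noncomm_ring <;> simp [h1, h2] <;> noncomm_ring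
end

section
/- Let t ≥ 0 be an integer and let λ₁ ≥ λ₂ ≥ ⋯ ≥ λ_t and λ_{t+1} ≥ λ_{t+2} ≥ ⋯ ≥ λ_{2t+1} be nonnegative integers (all even). Then 1 + Σ_{1≤i,j≤t} (−|λ_i − λ_j| − 1) + 2·Σ_{t+1≤i≤2t+1, 1≤j≤t} (λ_i + λ_j + 3) + Σ_{t+1≤i,j≤2t+1} (−|λ_i − λ_j| − 1) = 4t(t+1) + 4·Σ_{i=1}^{t} (λ_i + λ_{t+1+i})·i. In particular this quantity is strictly positive unless t = 0. -/
lemma key (a : ℕ) (f : ℕ → ℤ) :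
    ∀ b, (∀ i j, a ≤ i → i ≤ j → j ≤ b → f j ≤ f i) →
    ∑ i ∈ Finset.Icc a b, ∑ j ∈ Finset.Icc a b, |f i - f j|
      = 2 * ∑ i ∈ Finset.Icc a b, ((b:ℤ) + (a:ℤ) - 2*(i:ℤ)) * f i := by
  intro b
  induction b with
  | zero =>
    intro _
    rcases Nat.eq_zero_or_pos a with ha | ha
    · subst ha; simp
    · rw [Finset.Icc_eq_empty (by omega)]; simp
  | succ b ih =>
    intro hm
    by_cases hab : a ≤ b
    · have hIcc : Finset.Icc a (b+1) = insert (b+1) (Finset.Icc a b) := by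
        ext x; simp only [Finset.mem_insert, Finset.mem_Icc]; omega
      have hnm : b+1 ∉ Finset.Icc a b := by simp
      have habs : ∀ i ∈ Finset.Icc a b, |f (b+1) - f i| = f i - f (b+1) := by
        intro i hi
        simp only [Finset.mem_Icc] at hi
        have := hm i (b+1) hi.1 (by omega) (le_refl _)
        rw [abs_sub_comm, abs_of_nonneg (by linarith)]
      have habs' : ∀ i ∈ Finset.Icc a b, |f i - f (b+1)| = f i - f (b+1) := by
        intro i hi
        simp only [Finset.mem_Icc] at hi
        have := hm i (b+1) hi.1 (by omega) (le_refl _)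
        rw [abs_of_nonneg (by linarith)]
      have ih' := ih (fun i j h1 h2 h3 => hm i j h1 h2 (by omega))
      have hc : ((Finset.Icc a b).card : ℤ) = (b:ℤ) + 1 - a := by
        rw [Nat.card_Icc]; omega
      rw [hIcc, Finset.sum_insert hnm, Finset.sum_insert hnm, sub_self, abs_zero,
        Finset.sum_congr rfl habs]
      have hrw : ∀ i ∈ Finset.Icc a b,
          ∑ j ∈ insert (b+1) (Finset.Icc a b), |f i - f j|
            = (f i - f (b+1)) + ∑ j ∈ Finset.Icc a b, |f i - f j| := by
        intro i hi
        rw [Finset.sum_insert hnm, habs' i hi]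
      rw [Finset.sum_congr rfl hrw, Finset.sum_add_distrib, ih',
        Finset.sum_sub_distrib, Finset.sum_const, nsmul_eq_mul,
        Finset.sum_insert hnm]
      have hsplit : ∑ i ∈ Finset.Icc a b, (((b:ℤ)+1) + (a:ℤ) - 2*(i:ℤ)) * f i
          = ∑ i ∈ Finset.Icc a b, (((b:ℤ) + (a:ℤ) - 2*(i:ℤ)) * f i + f i) := by
        apply Finset.sum_congr rfl; intro i _; ring
      push_cast [hsplit, Finset.sum_add_distrib, hc]
      ring
    · by_cases hab' : a = b + 1
      · subst hab'
        simp only [Finset.Icc_self, Finset.sum_singleton, sub_self, abs_zero]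
        push_cast; ring
      · rw [Finset.Icc_eq_empty (by omega)]; simp

/-- the closed-form identity for the sum of the `m_{i,j}` (all λ's even),
together with strict positivity unless `t = 0`. -/
theorem stmt_4 (t : ℕ) (lam : ℕ → ℤ)
    (h1 : ∀ i j, 1 ≤ i → i ≤ j → j ≤ t → lam j ≤ lam i)
    (h2 : ∀ i j, t + 1 ≤ i → i ≤ j → j ≤ 2 * t + 1 → lam j ≤ lam i)
    (hnn : ∀ i, 1 ≤ i → i ≤ 2 * t + 1 → 0 ≤ lam i)
    (hev : ∀ i, 1 ≤ i → i ≤ 2 * t + 1 → Even (lam i)) :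
    (1 + (∑ i ∈ Finset.Icc 1 t, ∑ j ∈ Finset.Icc 1 t, (-|lam i - lam j| - 1))
      + 2 * ∑ i ∈ Finset.Icc (t+1) (2*t+1), ∑ j ∈ Finset.Icc 1 t, (lam i + lam j + 3)
      + ∑ i ∈ Finset.Icc (t+1) (2*t+1), ∑ j ∈ Finset.Icc (t+1) (2*t+1),
          (-|lam i - lam j| - 1)
      = 4 * (t : ℤ) * ((t : ℤ) + 1)
        + 4 * ∑ i ∈ Finset.Icc 1 t, (lam i + lam (t + 1 + i)) * (i : ℤ))
    ∧ (t ≠ 0 →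
      0 < 1 + (∑ i ∈ Finset.Icc 1 t, ∑ j ∈ Finset.Icc 1 t, (-|lam i - lam j| - 1))
        + 2 * ∑ i ∈ Finset.Icc (t+1) (2*t+1), ∑ j ∈ Finset.Icc 1 t, (lam i + lam j + 3)
        + ∑ i ∈ Finset.Icc (t+1) (2*t+1), ∑ j ∈ Finset.Icc (t+1) (2*t+1),
            (-|lam i - lam j| - 1)) := by
  set S1 := Finset.Icc 1 t with hS1
  set S2 := Finset.Icc (t+1) (2*t+1) with hS2
  have hc1 : (S1.card : ℤ) = (t : ℤ) := by rw [hS1, Nat.card_Icc]; omega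
  have hc2 : (S2.card : ℤ) = (t : ℤ) + 1 := by rw [hS2, Nat.card_Icc]; omega
  set A := ∑ i ∈ S1, lam i with hA
  set B := ∑ i ∈ S2, lam i with hB
  set C := ∑ i ∈ S1, (i:ℤ) * lam i with hC
  set D := ∑ i ∈ S2, (i:ℤ) * lam i with hD
  -- block 1 absolute sum
  have hT1 : ∑ i ∈ S1, ∑ j ∈ S1, |lam i - lam j|
      = 2 * (((t:ℤ)+1) * A - 2 * C) := by
    rw [hS1, key 1 lam t h1]
    congr 1
    rw [hA, hC, Finset.mul_sum, Finset.mul_sum, ← Finset.sum_sub_distrib]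
    apply Finset.sum_congr rfl
    intro i _; push_cast; ring
  have hT2 : ∑ i ∈ S2, ∑ j ∈ S2, |lam i - lam j|
      = 2 * ((3*(t:ℤ)+2) * B - 2 * D) := by
    rw [hS2, key (t+1) lam (2*t+1) h2]
    congr 1
    rw [hB, hD, Finset.mul_sum, Finset.mul_sum, ← Finset.sum_sub_distrib]
    apply Finset.sum_congr rfl
    intro i _; push_cast; ring
  -- rewrite the (-|..| - 1) blocks
  have e1 : ∑ i ∈ S1, ∑ j ∈ S1, (-|lam i - lam j| - 1)
      = -(2 * (((t:ℤ)+1) * A - 2 * C)) - (t:ℤ) * (t:ℤ) := by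
    rw [← hT1]
    simp only [Finset.sum_sub_distrib, Finset.sum_const, nsmul_eq_mul, mul_one,
      Finset.sum_neg_distrib]
    rw [hc1]
  have e2 : ∑ i ∈ S2, ∑ j ∈ S2, (-|lam i - lam j| - 1)
      = -(2 * ((3*(t:ℤ)+2) * B - 2 * D)) - ((t:ℤ)+1) * ((t:ℤ)+1) := by
    rw [← hT2]
    simp only [Finset.sum_sub_distrib, Finset.sum_const, nsmul_eq_mul, mul_one,
      Finset.sum_neg_distrib]
    rw [hc2]
  -- middle block
  have emid : ∑ i ∈ S2, ∑ j ∈ S1, (lam i + lam j + 3)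
      = (t:ℤ) * B + ((t:ℤ)+1) * A + 3 * (t:ℤ) * ((t:ℤ)+1) := by
    have hinner : ∀ i, ∑ j ∈ S1, (lam i + lam j + 3) = (t:ℤ) * lam i + A + 3 * (t:ℤ) := by
      intro i
      simp only [Finset.sum_add_distrib, Finset.sum_const, nsmul_eq_mul, hA]
      rw [hc1]; ring
    rw [Finset.sum_congr rfl (fun i _ => hinner i)]
    simp only [Finset.sum_add_distrib, Finset.sum_const, nsmul_eq_mul, ← hB,
      ← Finset.mul_sum]
    rw [hc2]; ring
  -- reindexing for the RHS
  have eRHS : ∑ i ∈ Finset.Icc 1 t, (lam i + lam (t + 1 + i)) * (i:ℤ)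
      = C + (D - ((t:ℤ)+1) * B) := by
    have esplit : ∑ i ∈ Finset.Icc 1 t, (lam i + lam (t + 1 + i)) * (i:ℤ)
        = C + ∑ i ∈ Finset.Icc 1 t, (i:ℤ) * lam (t + 1 + i) := by
      rw [hC, hS1, ← Finset.sum_add_distrib]
      apply Finset.sum_congr rfl
      intro i _; ring
    have emap : ∑ i ∈ Finset.Icc 1 t, (i:ℤ) * lam (t + 1 + i)
        = ∑ j ∈ Finset.Icc (t+2) (2*t+1), ((j:ℤ) - ((t:ℤ)+1)) * lam j := by
      have : Finset.Icc (t+2) (2*t+1)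
          = Finset.map (addLeftEmbedding (t+1)) (Finset.Icc 1 t) := by
        rw [Finset.map_add_left_Icc]
        congr 1 <;> omega
      rw [this, Finset.sum_map]
      apply Finset.sum_congr rfl
      intro i _
      simp only [addLeftEmbedding_apply]
      push_cast; ring
    have eins : Finset.Icc (t+1) (2*t+1) = insert (t+1) (Finset.Icc (t+2) (2*t+1)) := by
      ext x; simp only [Finset.mem_insert, Finset.mem_Icc]; omega
    have efull : ∑ j ∈ S2, ((j:ℤ) - ((t:ℤ)+1)) * lam j
        = ∑ j ∈ Finset.Icc (t+2) (2*t+1), ((j:ℤ) - ((t:ℤ)+1)) * lam j := by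
      rw [hS2, eins, Finset.sum_insert (by simp)]
      push_cast; ring
    have edist : ∑ j ∈ S2, ((j:ℤ) - ((t:ℤ)+1)) * lam j = D - ((t:ℤ)+1) * B := by
      rw [hD, hB, Finset.mul_sum, ← Finset.sum_sub_distrib]
      apply Finset.sum_congr rfl
      intro j _; ring
    rw [esplit, emap, ← efull, edist]
  have hmain : 1 + (∑ i ∈ S1, ∑ j ∈ S1, (-|lam i - lam j| - 1))
      + 2 * ∑ i ∈ S2, ∑ j ∈ S1, (lam i + lam j + 3)
      + ∑ i ∈ S2, ∑ j ∈ S2, (-|lam i - lam j| - 1)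
      = 4 * (t : ℤ) * ((t : ℤ) + 1)
        + 4 * ∑ i ∈ Finset.Icc 1 t, (lam i + lam (t + 1 + i)) * (i : ℤ) := by
    rw [e1, e2, emid, eRHS]; ring
  refine ⟨hmain, fun ht => ?_⟩
  rw [hmain]
  have ht1 : (1:ℤ) ≤ (t:ℤ) := by exact_mod_cast Nat.one_le_iff_ne_zero.mpr ht
  have hsum : 0 ≤ ∑ i ∈ Finset.Icc 1 t, (lam i + lam (t + 1 + i)) * (i:ℤ) := by
    apply Finset.sum_nonneg
    intro i hi
    simp only [Finset.mem_Icc] at hi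
    have hn1 : 0 ≤ lam i := hnn i hi.1 (by omega)
    have hn2 : 0 ≤ lam (t + 1 + i) := hnn (t+1+i) (by omega) (by omega)
    positivity
  nlinarith
end

section
/- Let λ_i, λ_j be nonnegative integers, both odd, and ω_i = ω_j ∈ Z/2Z. Consider Hom(V_{λ_i}^{ω_i}, V_{λ_j}^{ω_j})₁, the odd part of the Hom space between the irreducible graded sl₂-modules, as a graded sl₂-module under the adjoint action. Then tr(2 − h) on the f-invariants Hom(V_{λ_i}^{ω_i}, V_{λ_j}^{ω_j})₁^f plus tr(2 − h) on Hom(V_{λ_j}^{ω_j}, V_{λ_i}^{ω_i})₁^f minus (λ_i+1)(λ_j+1) equals 2·min{λ_i, λ_j} + 2. -/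
open Matrix

/-- The raising operator of the standard irreducible (l+1)-dimensional sl₂-module
(`e · v_b = b (l + 1 - b) v_{b-1}`). -/
def sl2e (F : Type*) [Field F] (l : ℕ) : Matrix (Fin (l+1)) (Fin (l+1)) F :=
  Matrix.of fun a b => if (a : ℕ) + 1 = (b : ℕ)
    then (((b : ℕ) * (l + 1 - (b : ℕ)) : ℕ) : F) else 0

/-- The lowering operator (`f · v_b = v_{b+1}`). -/
def sl2f (F : Type*) [Field F] (l : ℕ) : Matrix (Fin (l+1)) (Fin (l+1)) F :=
  Matrix.of fun a b => if (a : ℕ) = (b : ℕ) + 1 then 1 else 0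

/-- The Cartan operator (`h · v_a = (l - 2a) v_a`). -/
def sl2h (F : Type*) [Field F] (l : ℕ) : Matrix (Fin (l+1)) (Fin (l+1)) F :=
  Matrix.of fun a b => if a = b then (((l : ℤ) - 2 * (a : ℕ) : ℤ) : F) else 0

/-- `Hom(V_l^ω, V_m^ω)₁^f`: the odd part (for equal parities `ω` of the highest
weight vectors, oddness of `T` means `T` is supported on entries `(a,b)` with
`a + b` odd) of the Hom-space, intersected with the kernel of the action of `f`. -/
def homOddFInv (F : Type*) [Field F] (l m : ℕ) :
    Submodule F (Matrix (Fin (m+1)) (Fin (l+1)) F) where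
  carrier := {T | (∀ (a : Fin (m+1)) (b : Fin (l+1)), ((a : ℕ) + (b : ℕ)) % 2 = 0 → T a b = 0) ∧
    sl2f F m * T - T * sl2f F l = 0}
  add_mem' := by
    rintro a b ⟨ha1, ha2⟩ ⟨hb1, hb2⟩
    refine ⟨fun i j hij => by simp [Matrix.add_apply, ha1 i j hij, hb1 i j hij], ?_⟩
    have : sl2f F m * (a + b) - (a + b) * sl2f F l
        = (sl2f F m * a - a * sl2f F l) + (sl2f F m * b - b * sl2f F l) := by
      rw [Matrix.mul_add, Matrix.add_mul]; abel
    rw [this, ha2, hb2, add_zero]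
  zero_mem' := ⟨fun i j _ => rfl, by simp⟩
  smul_mem' := by
    rintro c a ⟨ha1, ha2⟩
    refine ⟨fun i j hij => by simp [Matrix.smul_apply, ha1 i j hij], ?_⟩
    simp only [Matrix.mul_smul, Matrix.smul_mul, ← smul_sub, ha2, smul_zero]

/-!
An `f`-intertwiner `T : V_l → V_m` is determined by `T v₀`, because `T v_b = f^b (T v₀)`;
hence it is a combination of the shifts `v_b ↦ v_{b+d}`, and such a shift intertwines `f`
exactly when `m ≤ l + d`, since `f` must kill the image of `v_l`. Oddness forces `d` to be odd,
so `Hom(V_l, V_m)₁^f` has the basis of shifts of degree `d = m - 2k`, `k < (min l m + 1) / 2`.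
Each is an eigenvector of `ad h` with eigenvalue `m - l - 2d`, so `2 - ad h` has trace
`∑ k, (l + m + 2 - 4k)` on either space, and twice this sum is
`(min l m + 1) (max l m + 3) = (l + 1) (m + 1) + 2 min l m + 2`.
-/

section EntryFormulas

variable {F : Type*} [Field F] {l m : ℕ} {n : Type*}

lemma sl2f_mul_apply_succ (T : Matrix (Fin (m+1)) n F) (a : ℕ) (ha : a + 1 < m + 1) (b : n) :
    (sl2f F m * T) ⟨a + 1, ha⟩ b = T ⟨a, by omega⟩ b := by
  rw [mul_apply, Finset.sum_eq_single ⟨a, by omega⟩] <;>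
    simp +contextual [sl2f, Fin.ext_iff, eq_comm]

lemma sl2f_mul_apply_zero (T : Matrix (Fin (m+1)) n F) (b : n) : (sl2f F m * T) 0 b = 0 := by
  simp [mul_apply, sl2f]

lemma mul_sl2f_apply_of_lt (T : Matrix n (Fin (l+1)) F) (a : n) (b : ℕ) (hb : b + 1 < l + 1) :
    (T * sl2f F l) a ⟨b, by omega⟩ = T a ⟨b + 1, hb⟩ := by
  rw [mul_apply, Finset.sum_eq_single ⟨b + 1, hb⟩] <;> simp +contextual [sl2f, Fin.ext_iff]

lemma mul_sl2f_apply_last (T : Matrix n (Fin (l+1)) F) (a : n) :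
    (T * sl2f F l) a (Fin.last l) = 0 := by
  refine (mul_apply ..).trans (Finset.sum_eq_zero fun c _ => ?_)
  rw [sl2f, of_apply, Fin.val_last, if_neg (by omega), mul_zero]

lemma sl2h_mul_apply (T : Matrix (Fin (m+1)) n F) (a : Fin (m+1)) (b : n) :
    (sl2h F m * T) a b = ((m : F) - 2 * (a : ℕ)) * T a b := by
  simp [mul_apply, sl2h]

lemma mul_sl2h_apply (T : Matrix n (Fin (l+1)) F) (a : n) (b : Fin (l+1)) :
    (T * sl2h F l) a b = T a b * ((l : F) - 2 * (b : ℕ)) := by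
  simp [mul_apply, sl2h]

end EntryFormulas

def shiftMatrix (F : Type*) [Field F] (l m d : ℕ) : Matrix (Fin (m+1)) (Fin (l+1)) F :=
  of fun a b => if (a : ℕ) = b + d then 1 else 0

namespace Sl2fIntertwiner

variable {F : Type*} [Field F] {l m : ℕ} {T : Matrix (Fin (m+1)) (Fin (l+1)) F}

lemma apply_eq_apply_succ_succ (hf : sl2f F m * T = T * sl2f F l) (a b : ℕ)
    (ha : a + 1 < m + 1) (hb : b + 1 < l + 1) :
    T ⟨a, by omega⟩ ⟨b, by omega⟩ = T ⟨a + 1, ha⟩ ⟨b + 1, hb⟩ := by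
  simpa only [sl2f_mul_apply_succ, mul_sl2f_apply_of_lt _ _ _ hb] using
    congrFun (congrFun hf ⟨a + 1, ha⟩) ⟨b, by omega⟩

lemma apply_zero_succ (hf : sl2f F m * T = T * sl2f F l) (b : ℕ) (hb : b + 1 < l + 1) :
    T 0 ⟨b + 1, hb⟩ = 0 := by
  simpa only [sl2f_mul_apply_zero, mul_sl2f_apply_of_lt _ _ _ hb, eq_comm] using
    congrFun (congrFun hf 0) ⟨b, by omega⟩

lemma apply_last (hf : sl2f F m * T = T * sl2f F l) (a : ℕ) (ha : a + 1 < m + 1) :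
    T ⟨a, by omega⟩ (Fin.last l) = 0 := by
  simpa only [sl2f_mul_apply_succ, mul_sl2f_apply_last] using
    congrFun (congrFun hf ⟨a + 1, ha⟩) (Fin.last l)

lemma apply_eq_apply_sub_zero (hf : sl2f F m * T = T * sl2f F l) (a b : ℕ)
    (ha : a < m + 1) (hb : b < l + 1) (hba : b ≤ a) :
    T ⟨a, ha⟩ ⟨b, hb⟩ = T ⟨a - b, by omega⟩ 0 := by
  induction b generalizing a with
  | zero => rfl
  | succ b ih =>
    obtain ⟨a, rfl⟩ : ∃ a', a = a' + 1 := ⟨a - 1, by omega⟩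
    rw [← apply_eq_apply_succ_succ hf a b ha hb, ih a _ _ (by omega)]
    simp

lemma apply_eq_zero_of_lt (hf : sl2f F m * T = T * sl2f F l) (a b : ℕ)
    (ha : a < m + 1) (hb : b < l + 1) (hab : a < b) : T ⟨a, ha⟩ ⟨b, hb⟩ = 0 := by
  induction a generalizing b with
  | zero =>
    obtain ⟨b, rfl⟩ : ∃ b', b = b' + 1 := ⟨b - 1, by omega⟩
    exact apply_zero_succ hf b hb
  | succ a ih =>
    obtain ⟨b, rfl⟩ : ∃ b', b = b' + 1 := ⟨b - 1, by omega⟩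
    rw [← apply_eq_apply_succ_succ hf a b ha hb]
    exact ih b _ _ (by omega)

lemma eq_sum_shiftMatrix (hf : sl2f F m * T = T * sl2f F l) :
    T = ∑ d : Fin (m+1), T d 0 • shiftMatrix F l m d := by
  ext ⟨a, ha⟩ ⟨b, hb⟩
  simp only [Matrix.sum_apply, Matrix.smul_apply, shiftMatrix, of_apply, smul_eq_mul, mul_ite,
    mul_one, mul_zero]
  by_cases hba : b ≤ a
  · have hd : a - b < m + 1 := by omega
    rw [Finset.sum_eq_single ⟨a - b, hd⟩, if_pos (by simp only; omega),
      apply_eq_apply_sub_zero hf a b ha hb hba]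
    · intro d _ hd
      rw [if_neg]
      contrapose! hd
      ext
      simp only
      omega
    · simp
  · rw [Finset.sum_eq_zero fun d _ => if_neg (by omega),
      apply_eq_zero_of_lt hf a b ha hb (by omega)]

lemma apply_zero_eq_zero_of_add_lt (hf : sl2f F m * T = T * sl2f F l) (d : ℕ) (hd : d + l < m) :
    T ⟨d, by omega⟩ 0 = 0 := by
  have hdiag := apply_eq_apply_sub_zero hf (d + l) l (by omega) (by omega) (by omega)
  simp only [Nat.add_sub_cancel] at hdiag
  rw [← hdiag]
  exact apply_last hf (d + l) (by omega)

end Sl2fIntertwiner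

section ShiftMatrix

variable {F : Type*} [Field F] {l m : ℕ}

lemma sl2f_mul_shiftMatrix {d : ℕ} (hml : m ≤ l + d) :
    sl2f F m * shiftMatrix F l m d = shiftMatrix F l m d * sl2f F l := by
  ext ⟨a, ha⟩ ⟨b, hb⟩
  have rhs : (shiftMatrix F l m d * sl2f F l) ⟨a, ha⟩ ⟨b, hb⟩
      = if a = b + 1 + d then 1 else 0 := by
    by_cases hb' : b + 1 < l + 1
    · rw [mul_sl2f_apply_of_lt _ _ _ hb']
      rfl
    · obtain rfl : l = b := by omega
      rw [show (⟨l, hb⟩ : Fin (l+1)) = Fin.last l from rfl, mul_sl2f_apply_last,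
        if_neg (by omega)]
  rw [rhs]
  rcases a with _ | a
  · rw [Fin.zero_eta, sl2f_mul_apply_zero, if_neg (by omega)]
  · rw [sl2f_mul_apply_succ]
    simp only [shiftMatrix, of_apply, show a + 1 = b + 1 + d ↔ a = b + d by omega]

lemma shiftMatrix_mem_homOddFInv {d : ℕ} (hd : Odd d) (hml : m ≤ l + d) :
    shiftMatrix F l m d ∈ homOddFInv F l m := by
  refine ⟨fun a b hab => if_neg ?_, sub_eq_zero.mpr (sl2f_mul_shiftMatrix hml)⟩
  obtain ⟨c, rfl⟩ := hd
  omega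

lemma sl2h_mul_shiftMatrix_sub (d : ℕ) :
    sl2h F m * shiftMatrix F l m d - shiftMatrix F l m d * sl2h F l
      = ((m : F) - l - 2 * d) • shiftMatrix F l m d := by
  ext a b
  rw [Matrix.sub_apply, sl2h_mul_apply, mul_sl2h_apply, Matrix.smul_apply]
  simp only [shiftMatrix, of_apply, smul_eq_mul]
  split_ifs with h
  · rw [h]; push_cast; ring
  · simp

lemma linearIndependent_shiftMatrix :
    LinearIndependent F fun d : Fin (m+1) => shiftMatrix F l m d := by
  refine Fintype.linearIndependent_iff.mpr fun g hg d => ?_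
  have := congrFun (congrFun hg d) 0
  simpa [Matrix.sum_apply, shiftMatrix, Fin.val_eq_val] using this

end ShiftMatrix

lemma LinearMap.trace_eq_sum_of_map_basis_eq_smul {K M ι : Type*} [CommRing K] [AddCommGroup M]
    [Module K M] [Fintype ι] [DecidableEq ι] (b : Module.Basis ι K M) (f : Module.End K M)
    (μ : ι → K) (hf : ∀ i, f (b i) = μ i • b i) : LinearMap.trace K M f = ∑ i, μ i := by
  have : LinearMap.toMatrix b b f = diagonal μ := by
    ext i j
    rw [LinearMap.toMatrix_apply, hf, map_smul, b.repr_self, diagonal_apply]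
    by_cases h : i = j <;> simp [h]
  rw [LinearMap.trace_eq_matrix_trace K b, this, trace_diagonal]

section OddFInvariants

variable {F : Type*} [Field F] {l m : ℕ}

def oddFInvDegree (l m : ℕ) (k : Fin ((min l m + 1) / 2)) : Fin (m+1) :=
  ⟨m - 2 * k, by omega⟩

lemma oddFInvDegree_injective : Function.Injective (oddFInvDegree l m) := by
  intro k k' h
  have := k.2
  have := k'.2
  simp only [oddFInvDegree, Fin.ext_iff] at h ⊢
  omega

lemma shiftMatrix_oddFInvDegree_mem (hm : Odd m) (k : Fin ((min l m + 1) / 2)) :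
    shiftMatrix F l m (oddFInvDegree l m k) ∈ homOddFInv F l m := by
  have := k.2
  rw [Nat.odd_iff] at hm
  exact shiftMatrix_mem_homOddFInv (Nat.odd_iff.mpr (by simp only [oddFInvDegree]; omega))
    (by simp only [oddFInvDegree]; omega)

lemma eq_sum_shiftMatrix_of_mem_homOddFInv (hl : Odd l) (hm : Odd m)
    {T : Matrix (Fin (m+1)) (Fin (l+1)) F} (hT : T ∈ homOddFInv F l m) :
    T = ∑ k, T (oddFInvDegree l m k) 0 • shiftMatrix F l m (oddFInvDegree l m k) := by
  obtain ⟨hodd, hf⟩ := hT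
  rw [sub_eq_zero] at hf
  rw [Nat.odd_iff] at hl hm
  conv_lhs => rw [Sl2fIntertwiner.eq_sum_shiftMatrix hf]
  refine (Fintype.sum_of_injective _ oddFInvDegree_injective _ _ ?_ fun k => rfl).symm
  intro ⟨d, hd⟩ hrange
  suffices T ⟨d, hd⟩ 0 = 0 by rw [this, zero_smul]
  by_cases hdodd : d % 2 = 1
  · refine Sl2fIntertwiner.apply_zero_eq_zero_of_add_lt hf d (not_le.mp fun hdl => hrange ?_)
    exact ⟨⟨(m - d) / 2, by omega⟩, by ext; simp only [oddFInvDegree]; omega⟩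
  · exact hodd _ 0 (by simp only [Fin.val_zero]; omega)

noncomputable def homOddFInvBasis (hl : Odd l) (hm : Odd m) :
    Module.Basis (Fin ((min l m + 1) / 2)) F (homOddFInv F l m) :=
  .mk (v := fun k =>
      ⟨shiftMatrix F l m (oddFInvDegree l m k), shiftMatrix_oddFInvDegree_mem hm k⟩)
    ((linearIndependent_shiftMatrix.comp _ oddFInvDegree_injective).of_comp
      (homOddFInv F l m).subtype)
    ((Submodule.top_le_span_range_iff_forall_exists_fun F).mpr fun T =>
      ⟨fun k => (T : Matrix (Fin (m+1)) (Fin (l+1)) F) (oddFInvDegree l m k) 0, Subtype.ext <| by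
        simpa only [Submodule.coe_sum, Submodule.coe_smul] using
          (eq_sum_shiftMatrix_of_mem_homOddFInv hl hm T.2).symm⟩)

lemma coe_homOddFInvBasis (hl : Odd l) (hm : Odd m) (k : Fin ((min l m + 1) / 2)) :
    (homOddFInvBasis (F := F) hl hm k : Matrix (Fin (m+1)) (Fin (l+1)) F)
      = shiftMatrix F l m (oddFInvDegree l m k) := by
  simp [homOddFInvBasis]

lemma trace_two_sub_ad_sl2h_homOddFInv (hl : Odd l) (hm : Odd m)
    (T : Module.End F (homOddFInv F l m))
    (hT : ∀ v : homOddFInv F l m, (T v : Matrix (Fin (m+1)) (Fin (l+1)) F)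
      = (2 : F) • (v : Matrix (Fin (m+1)) (Fin (l+1)) F)
        - (sl2h F m * (v : Matrix (Fin (m+1)) (Fin (l+1)) F)
          - (v : Matrix (Fin (m+1)) (Fin (l+1)) F) * sl2h F l)) :
    LinearMap.trace F _ T
      = ∑ k ∈ Finset.range ((min l m + 1) / 2), ((l + m + 2 : F) - 4 * k) := by
  rw [← Fin.sum_univ_eq_sum_range (fun k => (l + m + 2 : F) - 4 * k),
    LinearMap.trace_eq_sum_of_map_basis_eq_smul (homOddFInvBasis hl hm) T _ fun k => ?_]
  have hk : 2 * (k : ℕ) ≤ m := by have := k.2; omega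
  apply Subtype.ext
  rw [hT, Submodule.coe_smul, coe_homOddFInvBasis, sl2h_mul_shiftMatrix_sub, ← sub_smul]
  simp only [oddFInvDegree, Nat.cast_sub hk]
  congr 1
  push_cast
  ring

end OddFInvariants

lemma two_mul_sum_range_sub_four_mul {R : Type*} [CommRing R] (c : R) (N : ℕ) :
    2 * ∑ k ∈ Finset.range N, (c - 4 * k) = 2 * N * (c + 2 - 2 * N) := by
  induction N with
  | zero => simp
  | succ N ih =>
    rw [Finset.sum_range_succ, mul_add, ih]
    push_cast
    ring

theorem stmt_7_general (F : Type*) [Field F] (l m : ℕ) (hl : Odd l) (hm : Odd m)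
    (T1 : Module.End F ↥(homOddFInv F l m))
    (hT1 : ∀ v : ↥(homOddFInv F l m),
      (T1 v : Matrix (Fin (m+1)) (Fin (l+1)) F)
        = (2 : F) • (v : Matrix (Fin (m+1)) (Fin (l+1)) F)
          - (sl2h F m * (v : Matrix (Fin (m+1)) (Fin (l+1)) F)
            - (v : Matrix (Fin (m+1)) (Fin (l+1)) F) * sl2h F l))
    (T2 : Module.End F ↥(homOddFInv F m l))
    (hT2 : ∀ v : ↥(homOddFInv F m l),
      (T2 v : Matrix (Fin (l+1)) (Fin (m+1)) F)
        = (2 : F) • (v : Matrix (Fin (l+1)) (Fin (m+1)) F)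
          - (sl2h F l * (v : Matrix (Fin (l+1)) (Fin (m+1)) F)
            - (v : Matrix (Fin (l+1)) (Fin (m+1)) F) * sl2h F m)) :
    LinearMap.trace F _ T1 + LinearMap.trace F _ T2
      = (((l + 1) * (m + 1) + 2 * min l m + 2 : ℕ) : F) := by
  rw [trace_two_sub_ad_sl2h_homOddFInv hl hm T1 hT1,
    trace_two_sub_ad_sl2h_homOddFInv hm hl T2 hT2, min_comm m l, add_comm (m : F) l, ← two_mul,
    two_mul_sum_range_sub_four_mul]
  have hN : 2 * ((min l m + 1) / 2) = min l m + 1 := by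
    have := Nat.odd_iff.mp hl
    have := Nat.odd_iff.mp hm
    omega
  have hN' := congrArg (Nat.cast (R := F)) hN
  push_cast at hN' ⊢
  rcases le_total l m with h | h
  · rw [min_eq_left h] at hN' ⊢
    linear_combination (m + 3 - 2 * (((l + 1) / 2 : ℕ) : F)) * hN'
  · rw [min_eq_right h] at hN' ⊢
    linear_combination (l + 3 - 2 * (((m + 1) / 2 : ℕ) : F)) * hN'

/-- for odd highest weights `l, m` and equal parities, the sum of the
traces of `2 − h` on `Hom(V_l, V_m)₁^f` and on `Hom(V_m, V_l)₁^f`, minus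
`(l+1)(m+1)`, equals `2·min(l,m) + 2`. -/
theorem stmt_7 (F : Type*) [Field F] [CharZero F] (l m : ℕ) (hl : Odd l) (hm : Odd m)
    (T1 : Module.End F ↥(homOddFInv F l m))
    (hT1 : ∀ v : ↥(homOddFInv F l m),
      (T1 v : Matrix (Fin (m+1)) (Fin (l+1)) F)
        = (2 : F) • (v : Matrix (Fin (m+1)) (Fin (l+1)) F)
          - (sl2h F m * (v : Matrix (Fin (m+1)) (Fin (l+1)) F)
            - (v : Matrix (Fin (m+1)) (Fin (l+1)) F) * sl2h F l))
    (T2 : Module.End F ↥(homOddFInv F m l))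
    (hT2 : ∀ v : ↥(homOddFInv F m l),
      (T2 v : Matrix (Fin (l+1)) (Fin (m+1)) F)
        = (2 : F) • (v : Matrix (Fin (l+1)) (Fin (m+1)) F)
          - (sl2h F l * (v : Matrix (Fin (l+1)) (Fin (m+1)) F)
            - (v : Matrix (Fin (l+1)) (Fin (m+1)) F) * sl2h F m)) :
    LinearMap.trace F _ T1 + LinearMap.trace F _ T2
      = (((l + 1) * (m + 1) + 2 * min l m + 2 : ℕ) : F) :=
  stmt_7_general F l m hl hm T1 hT1 T2 hT2
end

section
/- Let F be a field, p ≥ 1, and let e = [[0,x],[y,0]], e' = [[0,x'],[y',0]] ∈ Mat_{2p+1}(F) be two elements of I_{p,p+1} with e^{2p} ≠ 0 and (e')^{2p} ≠ 0 (both regular nilpotent). Then there exists h = diag(a,b) with a ∈ GL_p(F), b ∈ GL_{p+1}(F) such that h e h⁻¹ = e'. -/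
open Matrix Polynomial

section Stmt17Aux

variable {F : Type*} [Field F]

/-- A nilpotent matrix over a field raised to the cardinality of the index type is zero. -/
lemma stmt17_nilp_pow_card {n : Type*} [Fintype n] [DecidableEq n]
    (M : Matrix n n F) (h : IsNilpotent M) : M ^ Fintype.card n = 0 := by
  have h1 := Matrix.isNilpotent_charpoly_sub_pow_of_isNilpotent h
  have h2 : M.charpoly = X ^ Fintype.card n := by
    rw [← sub_eq_zero]; exact h1.eq_zero
  have h3 := Matrix.aeval_self_charpoly M
  rw [h2] at h3; simpa using h3

lemma stmt17_fromBlocks_diag_pow {m n : Type*} [Fintype m] [Fintype n]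
    [DecidableEq m] [DecidableEq n]
    (A : Matrix m m F) (D : Matrix n n F) (k : ℕ) :
    (fromBlocks A 0 0 D) ^ k = fromBlocks (A ^ k) 0 0 (D ^ k) := by
  induction k with
  | zero => simp [Matrix.fromBlocks_one]
  | succ k ih => rw [pow_succ, pow_succ, pow_succ, ih, Matrix.fromBlocks_multiply]; simp

/-- The model regular nilpotent element of `I_{p,p+1}`. -/
def stmt17_N (F : Type*) [Field F] (p : ℕ) :
    Matrix (Fin p ⊕ Fin (p+1)) (Fin p ⊕ Fin (p+1)) F :=
  fromBlocks 0 (Matrix.of fun i k => if (i : ℕ) = (k : ℕ) then 1 else 0)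
    (Matrix.of fun i k => if (i : ℕ) = (k : ℕ) + 1 then 1 else 0) 0

/-- Key construction: any regular nilpotent `e ∈ I_{p,p+1}` is block-diagonally
conjugate to the model `stmt17_N`. -/
lemma stmt17_key (p : ℕ)
    (x : Matrix (Fin p) (Fin (p+1)) F) (y : Matrix (Fin (p+1)) (Fin p) F)
    (e : Matrix (Fin p ⊕ Fin (p+1)) (Fin p ⊕ Fin (p+1)) F)
    (he : e = fromBlocks 0 x y 0) (hnil : IsNilpotent e) (hreg : e ^ (2*p) ≠ 0) :
    ∃ (a : Matrix (Fin p) (Fin p) F) (b : Matrix (Fin (p+1)) (Fin (p+1)) F),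
      IsUnit a ∧ IsUnit b ∧
      e * fromBlocks a 0 0 b = fromBlocks a 0 0 b * stmt17_N F p := by
  classical
  -- `e^(2p+1) = 0`
  have hcard : Fintype.card (Fin p ⊕ Fin (p+1)) = 2*p+1 := by
    simp [Fintype.card_sum]; omega
  have htop : e ^ (2*p+1) = 0 := by
    rw [← hcard]; exact stmt17_nilp_pow_card e hnil
  -- `e²` is block diagonal
  have hsq : e ^ 2 = fromBlocks (x*y) 0 0 (y*x) := by
    rw [he, pow_two, Matrix.fromBlocks_multiply]; simp
  -- `x*y` is nilpotent, hence `(x*y)^p = 0`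
  have hxy_nil : IsNilpotent (x*y) := by
    obtain ⟨m, hm⟩ := hnil
    refine ⟨m, ?_⟩
    have h2 : (e ^ 2) ^ m = 0 := by
      rw [← pow_mul, mul_comm, pow_mul, hm]
      simp
    rw [hsq, stmt17_fromBlocks_diag_pow] at h2
    ext i i'
    have := congrFun (congrFun h2 (Sum.inl i)) (Sum.inl i')
    simpa using this
  have hxyp : (x*y) ^ p = 0 := by
    have := stmt17_nilp_pow_card (x*y) hxy_nil
    simpa using this
  have h2p : e ^ (2*p) = fromBlocks 0 0 0 ((y*x) ^ p) := by
    have : e ^ (2*p) = (e ^ 2) ^ p := by rw [← pow_mul]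
    rw [this, hsq, stmt17_fromBlocks_diag_pow, hxyp]
  -- choose an entry where `(y*x)^p` is nonzero
  have hyx : (y*x) ^ p ≠ 0 := by
    intro h0
    exact hreg (by rw [h2p, h0]; simp)
  obtain ⟨i₀, j₀, hij⟩ : ∃ i j, ((y*x) ^ p) i j ≠ 0 := by
    by_contra hc
    push_neg at hc
    exact hyx (by ext i j; simpa using hc i j)
  -- the cyclic vector and the Krylov sequence
  set v : (Fin p ⊕ Fin (p+1)) → F := Pi.single (Sum.inr j₀) 1 with hv
  set w : ℕ → (Fin p ⊕ Fin (p+1)) → F := fun k => (e ^ k).mulVec v with hw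
  have hstep : ∀ k, w (k+1) = e.mulVec (w k) := by
    intro k
    rw [hw]
    simp only []
    rw [pow_succ', ← Matrix.mulVec_mulVec]
  have hvtop : w (2*p) ≠ 0 := by
    intro h0
    apply hij
    have h1 := congrFun h0 (Sum.inr i₀)
    rw [hw] at h1
    simp only [h2p, hv] at h1
    rw [Matrix.mulVec_single] at h1
    simpa using h1
  -- parity of supports
  have step01 : ∀ u : (Fin p ⊕ Fin (p+1)) → F, (∀ i, u (Sum.inl i) = 0) →
      ∀ i, e.mulVec u (Sum.inr i) = 0 := by
    intro u hu i
    rw [he, Matrix.fromBlocks_mulVec]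
    have : u ∘ Sum.inl = 0 := funext hu
    simp [this]
  have step10 : ∀ u : (Fin p ⊕ Fin (p+1)) → F, (∀ i, u (Sum.inr i) = 0) →
      ∀ i, e.mulVec u (Sum.inl i) = 0 := by
    intro u hu i
    rw [he, Matrix.fromBlocks_mulVec]
    have : u ∘ Sum.inr = 0 := funext hu
    simp [this]
  have hparity : ∀ k, (∀ i, w (2*k) (Sum.inl i) = 0) ∧ (∀ i, w (2*k+1) (Sum.inr i) = 0) := by
    intro k
    induction k with
    | zero =>
      have h0 : ∀ i, w 0 (Sum.inl i) = 0 := by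
        intro i
        rw [hw]
        simp [hv]
      exact ⟨h0, by
        intro i
        rw [show 2*0+1 = 0+1 from rfl, hstep]
        exact step01 _ h0 i⟩
    | succ k ih =>
      have heven : ∀ i, w (2*(k+1)) (Sum.inl i) = 0 := by
        intro i
        rw [show 2*(k+1) = (2*k+1)+1 by ring, hstep]
        exact step10 _ ih.2 i
      exact ⟨heven, by
        intro i
        rw [hstep]
        exact step01 _ heven i⟩
  have heven : ∀ k i, w (2*k) (Sum.inl i) = 0 := fun k => (hparity k).1
  have hodd : ∀ k i, w (2*k+1) (Sum.inr i) = 0 := fun k => (hparity k).2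
  have htop' : ∀ k, 2*p+1 ≤ k → w k = 0 := by
    intro k hk
    rw [hw]
    simp only []
    rw [pow_eq_zero_of_le hk htop]
    simp
  -- linear independence of the Krylov family
  have li : LinearIndependent F (fun i : Fin (2*p+1) => w (i : ℕ)) := by
    rw [Fintype.linearIndependent_iff]
    intro g hg
    suffices H : ∀ n : ℕ, ∀ i : Fin (2*p+1), (i : ℕ) = n → g i = 0 by
      intro i; exact H i i rfl
    intro n
    induction n using Nat.strong_induction_on with
    | _ n IH =>
      intro i hi
      have hn : n ≤ 2*p := by have := i.isLt; omega
      have key := congrArg (fun u => (e ^ (2*p-n)).mulVec u) hg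
      simp only [Matrix.mulVec_zero] at key
      have lhs : (e ^ (2*p-n)).mulVec (∑ j : Fin (2*p+1), g j • w (j : ℕ))
          = ∑ j : Fin (2*p+1), g j • w (2*p - n + (j : ℕ)) := by
        rw [← Matrix.mulVecLin_apply, map_sum]
        refine Finset.sum_congr rfl fun j _ => ?_
        rw [_root_.map_smul, Matrix.mulVecLin_apply, hw]
        simp only []
        rw [Matrix.mulVec_mulVec, ← pow_add]
      rw [lhs] at key
      rw [Finset.sum_eq_single i ?h1 ?h2] at key
      · rw [hi, Nat.sub_add_cancel hn] at key
        rcases smul_eq_zero.mp key with h | h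
        · exact h
        · exact absurd h hvtop
      case h1 =>
        intro b _ hb
        rcases lt_trichotomy (b : ℕ) n with hlt | heq | hgt
        · rw [IH b hlt b rfl, zero_smul]
        · exact absurd (Fin.ext (heq.trans hi.symm)) hb
        · rw [htop' _ (by omega), smul_zero]
      case h2 =>
        intro h; exact absurd (Finset.mem_univ i) h
  -- the adapted basis, as a block diagonal matrix
  set a : Matrix (Fin p) (Fin p) F := Matrix.of fun i k => w (2*(k:ℕ)+1) (Sum.inl i) with ha
  set b : Matrix (Fin (p+1)) (Fin (p+1)) F := Matrix.of fun i k => w (2*(k:ℕ)) (Sum.inr i) with hb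
  set P : Matrix (Fin p ⊕ Fin (p+1)) (Fin p ⊕ Fin (p+1)) F := fromBlocks a 0 0 b with hP
  have hcol : ∀ c r, P r c =
      w (Sum.elim (fun k : Fin p => 2*(k:ℕ)+1) (fun k : Fin (p+1) => 2*(k:ℕ)) c) r := by
    intro c r
    cases c with
    | inl k =>
      cases r with
      | inl i => simp [hP, ha]
      | inr i => simp [hP, (hodd k i).symm]
    | inr k =>
      cases r with
      | inl i => simp [hP, (heven k i).symm]
      | inr i => simp [hP, hb]
  -- P is a unit
  have hPunit : IsUnit P := by
    rw [← Matrix.linearIndependent_cols_iff_isUnit]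
    have hσ : Function.Injective
        (Sum.elim (fun k : Fin p => (⟨2*(k:ℕ)+1, by omega⟩ : Fin (2*p+1)))
          (fun k : Fin (p+1) => (⟨2*(k:ℕ), by omega⟩ : Fin (2*p+1)))) := by
      intro c c' h
      cases c <;> cases c' <;>
        simp only [Sum.elim_inl, Sum.elim_inr, Fin.mk.injEq] at h <;>
        first
          | exact congrArg Sum.inl (Fin.ext (by omega))
          | exact congrArg Sum.inr (Fin.ext (by omega))
          | exact absurd h (by omega)
    have := li.comp _ hσ
    convert this using 1
    funext c
    cases c with
    | inl k => funext r; exact hcol (Sum.inl k) r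
    | inr k => funext r; exact hcol (Sum.inr k) r
  -- a and b are units
  have hdet : IsUnit (a.det * b.det) := by
    have := hPunit
    rw [Matrix.isUnit_iff_isUnit_det, hP, Matrix.det_fromBlocks_zero₁₂] at this
    exact this
  have haU : IsUnit a := (Matrix.isUnit_iff_isUnit_det _).mpr (isUnit_of_mul_isUnit_left hdet)
  have hbU : IsUnit b := (Matrix.isUnit_iff_isUnit_det _).mpr (isUnit_of_mul_isUnit_right hdet)
  refine ⟨a, b, haU, hbU, ?_⟩
  -- the conjugation relation e * P = P * N
  ext r c
  have hL : (e * P) r c =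
      w (Sum.elim (fun k : Fin p => 2*(k:ℕ)+1) (fun k : Fin (p+1) => 2*(k:ℕ)) c + 1) r := by
    have h0 : (e * P) r c = (e.mulVec (fun j => P j c)) r := rfl
    rw [h0]
    have hfun : (fun j => P j c) =
        w (Sum.elim (fun k : Fin p => 2*(k:ℕ)+1) (fun k : Fin (p+1) => 2*(k:ℕ)) c) :=
      funext fun j => hcol c j
    rw [hfun, ← hstep]
  rw [hL]
  cases c with
  | inl k =>
    have hR : (P * stmt17_N F p) r (Sum.inl k) = P r (Sum.inr ⟨(k:ℕ)+1, by omega⟩) := by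
      rw [Matrix.mul_apply, Fintype.sum_sum_type]
      have h1 : ∀ i : Fin p, P r (Sum.inl i) * stmt17_N F p (Sum.inl i) (Sum.inl k) = 0 := by
        intro i; simp [stmt17_N]
      have h2 : ∑ i : Fin (p+1), P r (Sum.inr i) * stmt17_N F p (Sum.inr i) (Sum.inl k)
          = P r (Sum.inr ⟨(k:ℕ)+1, by omega⟩) := by
        rw [Finset.sum_eq_single (⟨(k:ℕ)+1, by omega⟩ : Fin (p+1))]
        · simp [stmt17_N]
        · intro i _ hne
          have : (i : ℕ) ≠ (k : ℕ) + 1 := by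
            intro h; exact hne (Fin.ext (by simpa using h))
          simp [stmt17_N, this]
        · intro h; exact absurd (Finset.mem_univ _) h
      simp [h1, h2]
    rw [hR, hcol]
    simp only [Sum.elim_inl, Sum.elim_inr]
    ring_nf
  | inr k =>
    have hR : (P * stmt17_N F p) r (Sum.inr k) =
        ∑ i : Fin p, P r (Sum.inl i) * (if (i:ℕ) = (k:ℕ) then 1 else 0) := by
      rw [Matrix.mul_apply, Fintype.sum_sum_type]
      have h2 : ∀ i : Fin (p+1), P r (Sum.inr i) * stmt17_N F p (Sum.inr i) (Sum.inr k) = 0 := by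
        intro i; simp [stmt17_N]
      simp [h2, stmt17_N]
    rw [hR]
    by_cases hk : (k : ℕ) < p
    · rw [Finset.sum_eq_single (⟨(k:ℕ), hk⟩ : Fin p)]
      · rw [hcol]
        simp
      · intro i _ hne
        have : (i : ℕ) ≠ (k : ℕ) := by
          intro h; exact hne (Fin.ext (by simpa using h))
        simp [this]
      · intro h; exact absurd (Finset.mem_univ _) h
    · have hkp : (k : ℕ) = p := by have := k.isLt; omega
      rw [Finset.sum_eq_zero]
      · simp only [Sum.elim_inr]
        rw [htop' (2*(k:ℕ)+1) (by omega)]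
        rfl
      · intro i _
        have : (i : ℕ) ≠ (k : ℕ) := by have := i.isLt; omega
        simp [this]

end Stmt17Aux

/-- Kostant–Rallis for `(GL_{2p+1}, GL_p × GL_{p+1})`: any two
regular nilpotent elements `e = [[0,x],[y,0]]`, `e' = [[0,x'],[y',0]]` of
`I_{p,p+1}` (nilpotent with `e^{2p} ≠ 0`) are conjugate by an element
`diag(a,b) ∈ GL_p(F) × GL_{p+1}(F)`. -/
theorem stmt_17 (F : Type*) [Field F] (p : ℕ) (hp : 1 ≤ p)
    (x x' : Matrix (Fin p) (Fin (p+1)) F) (y y' : Matrix (Fin (p+1)) (Fin p) F)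
    (e e' : Matrix (Fin p ⊕ Fin (p+1)) (Fin p ⊕ Fin (p+1)) F)
    (he : e = fromBlocks 0 x y 0) (he' : e' = fromBlocks 0 x' y' 0)
    (hnil : IsNilpotent e) (hnil' : IsNilpotent e')
    (hreg : e ^ (2*p) ≠ 0) (hreg' : e' ^ (2*p) ≠ 0) :
    ∃ (a : Matrix (Fin p) (Fin p) F) (b : Matrix (Fin (p+1)) (Fin (p+1)) F),
      IsUnit a ∧ IsUnit b ∧
      fromBlocks a 0 0 b * e * (fromBlocks a 0 0 b)⁻¹ = e' := by
  classical
  obtain ⟨a₁, b₁, ha₁, hb₁, hrel₁⟩ := stmt17_key p x y e he hnil hreg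
  obtain ⟨a₂, b₂, ha₂, hb₂, hrel₂⟩ := stmt17_key p x' y' e' he' hnil' hreg'
  set P₁ : Matrix (Fin p ⊕ Fin (p+1)) (Fin p ⊕ Fin (p+1)) F := fromBlocks a₁ 0 0 b₁ with hP₁
  set P₂ : Matrix (Fin p ⊕ Fin (p+1)) (Fin p ⊕ Fin (p+1)) F := fromBlocks a₂ 0 0 b₂ with hP₂
  have hda₁ : IsUnit a₁.det := (Matrix.isUnit_iff_isUnit_det _).mp ha₁
  have hdb₁ : IsUnit b₁.det := (Matrix.isUnit_iff_isUnit_det _).mp hb₁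
  have hdP₁ : IsUnit P₁.det := by
    rw [hP₁, Matrix.det_fromBlocks_zero₁₂]
    exact hda₁.mul hdb₁
  have hdP₂ : IsUnit P₂.det := by
    rw [hP₂, Matrix.det_fromBlocks_zero₁₂]
    exact ((Matrix.isUnit_iff_isUnit_det _).mp ha₂).mul ((Matrix.isUnit_iff_isUnit_det _).mp hb₂)
  -- inverse of P₁ is block diagonal
  have hinv : P₁⁻¹ = fromBlocks a₁⁻¹ 0 0 b₁⁻¹ := by
    apply Matrix.inv_eq_right_inv
    rw [hP₁, Matrix.fromBlocks_multiply]
    simp [Matrix.mul_nonsing_inv _ hda₁, Matrix.mul_nonsing_inv _ hdb₁,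
      Matrix.fromBlocks_one]
  refine ⟨a₂ * a₁⁻¹, b₂ * b₁⁻¹, ha₂.mul (Matrix.isUnit_nonsing_inv_iff.mpr ha₁),
    hb₂.mul (Matrix.isUnit_nonsing_inv_iff.mpr hb₁), ?_⟩
  have hH : fromBlocks (a₂ * a₁⁻¹) 0 0 (b₂ * b₁⁻¹) = P₂ * P₁⁻¹ := by
    rw [hinv, hP₂, Matrix.fromBlocks_multiply]
    simp
  rw [hH, Matrix.mul_inv_rev, Matrix.nonsing_inv_nonsing_inv _ hdP₁]
  have h1 : P₁⁻¹ * (e * P₁) = stmt17_N F p := by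
    rw [hrel₁, ← Matrix.mul_assoc, Matrix.nonsing_inv_mul _ hdP₁, Matrix.one_mul]
  have h2 : e' = P₂ * stmt17_N F p * P₂⁻¹ := by
    rw [← hrel₂, Matrix.mul_assoc, Matrix.mul_nonsing_inv _ hdP₂, Matrix.mul_one]
  rw [h2, ← h1]
  simp only [Matrix.mul_assoc]
end

section
/- Let F be a field of characteristic zero and V a finite-dimensional vector space over F. If A ∈ End(V) is nilpotent, v ∈ V, φ ∈ V*, and φ(A^k v) = 0 for all k ≥ 0, then A + v·φ is nilpotent, where v·φ denotes the rank-one endomorphism u ↦ φ(u)v. -/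
/-- if `A` is a nilpotent endomorphism of a finite-dimensional
vector space, `v ∈ V`, `φ ∈ V*`, and `φ(A^k v) = 0` for all `k ≥ 0`, then the
perturbation `A + v·φ` by the rank-one operator `u ↦ φ(u) v` is nilpotent. -/
theorem stmt_18 (F : Type*) [Field F] [CharZero F] (V : Type*) [AddCommGroup V]
    [Module F V] [FiniteDimensional F V] (A : Module.End F V) (hA : IsNilpotent A)
    (v : V) (φ : V →ₗ[F] F) (h : ∀ k : ℕ, φ ((A ^ k) v) = 0) :
    IsNilpotent (A + φ.smulRight v) := by
  obtain ⟨n, hn⟩ := hA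
  set B := φ.smulRight v with hBdef
  set W : Submodule F V := Submodule.span F (Set.range fun k : ℕ => (A ^ k) v) with hW
  have hv : v ∈ W := Submodule.subset_span ⟨0, by simp⟩
  have hBx : ∀ x : V, B x ∈ W := by
    intro x
    have hx : B x = φ x • v := rfl
    rw [hx]
    exact W.smul_mem _ hv
  have hφW : ∀ w ∈ W, φ w = 0 := by
    intro w hw
    induction hw using Submodule.span_induction with
    | mem x hx => obtain ⟨k, rfl⟩ := hx; exact h k
    | zero => simp
    | add x y _ _ hx hy => simp [hx, hy]
    | smul c x _ hx => simp [hx]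
  have hAW : ∀ w ∈ W, A w ∈ W := by
    intro w hw
    induction hw using Submodule.span_induction with
    | mem x hx =>
        obtain ⟨k, rfl⟩ := hx
        exact Submodule.subset_span ⟨k + 1, by show (A ^ (k + 1)) v = A ((A ^ k) v); rw [pow_succ']; rfl⟩
    | zero => simp
    | add x y _ _ hx hy => rw [map_add]; exact W.add_mem hx hy
    | smul c x _ hx => rw [map_smul]; exact W.smul_mem c hx
  -- On `W`, the operator `A + B` acts as `A`.
  have key : ∀ m : ℕ, ∀ w ∈ W, ((A + B) ^ m) w = (A ^ m) w := by
    intro m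
    induction m with
    | zero => intro w _; simp
    | succ m ih =>
        intro w hw
        have hBw : B w = 0 := by
          have hx : B w = φ w • v := rfl
          rw [hx, hφW w hw, zero_smul]
        have h1 : (A + B) w = A w := by
          rw [LinearMap.add_apply, hBw, add_zero]
        rw [pow_succ, pow_succ, Module.End.mul_apply, Module.End.mul_apply, h1,
          ih _ (hAW w hw)]
  -- Modulo `W`, the operator `A + B` acts as `A`.
  have diff : ∀ m : ℕ, ∀ x : V, ((A + B) ^ m) x - (A ^ m) x ∈ W := by
    intro m
    induction m with
    | zero => intro x; simp
    | succ m ih =>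
        intro x
        rw [pow_succ', pow_succ', Module.End.mul_apply, Module.End.mul_apply,
          LinearMap.add_apply]
        have hrw : A (((A + B) ^ m) x) + B (((A + B) ^ m) x) - A ((A ^ m) x)
            = A (((A + B) ^ m) x - (A ^ m) x) + B (((A + B) ^ m) x) := by
          rw [map_sub]; abel
        rw [hrw]
        exact W.add_mem (hAW _ (ih x)) (hBx _)
  refine ⟨n + n, ?_⟩
  ext x
  have h1 : ((A + B) ^ n) x ∈ W := by
    have hd := diff n x
    rwa [hn, LinearMap.zero_apply, sub_zero] at hd
  rw [pow_add, Module.End.mul_apply, key n _ h1, hn]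
  simp
end

section
/- Let A ∈ Mat_{ν,ν}(F) be semisimple with no eigenvalues ±1 and suppose A² − 1 is invertible. Then the 2ν×2ν block matrix M = [[A, 1],[A² − 1, A]] satisfies: M is invertible, M is conjugate by a block matrix to an element of the form g·θ(g)⁻¹ for some g ∈ GL_{2ν}(F) where θ(g) = diag(1,−1)·g·diag(1,−1) (blocks of size ν), and det M = (−1)^ν. -/
open Matrix Polynomial

lemma aux_det_fromBlocks_of_isUnit {K : Type*} [CommRing K] {n : Type*} [Fintype n] [DecidableEq n]
    (P Q R S : Matrix n n K) (h : Commute R S) (hS : IsUnit S.det) :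
    (fromBlocks P Q R S).det = (P * S - Q * R).det := by
  haveI := S.invertibleOfIsUnitDet hS
  rw [det_fromBlocks₂₂]
  have h2 : ⅟S * R * S = R := by
    rw [Matrix.mul_assoc, h.eq, ← Matrix.mul_assoc, invOf_mul_self, Matrix.one_mul]
  have h1 : Q * ⅟S * R * S = Q * R := by
    rw [Matrix.mul_assoc, Matrix.mul_assoc, ← Matrix.mul_assoc (⅟S), h2]
  calc S.det * (P - Q * ⅟S * R).det = ((P - Q * ⅟S * R) * S).det := by rw [det_mul, mul_comm]
  _ = (P * S - Q * R).det := by rw [Matrix.sub_mul, h1]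

lemma aux_det_map {K L n : Type*} [CommRing K] [CommRing L] [Fintype n] [DecidableEq n]
    (f : K →+* L) (M : Matrix n n K) : (M.map f).det = f M.det := by
  rw [← RingHom.mapMatrix_apply, ← RingHom.map_det]

lemma aux_det_fromBlocks_comm {F : Type*} [Field F] {n : Type*} [Fintype n] [DecidableEq n]
    (P Q R S : Matrix n n F) (h : Commute R S) :
    (fromBlocks P Q R S).det = (P * S - Q * R).det := by
  classical
  let Cf : F →+* F[X] := Polynomial.C
  set P1 := P.map Cf with hP1
  set Q1 := Q.map Cf with hQ1
  set R1 := R.map Cf with hR1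
  set S1 := charmatrix (-S) with hS1
  have hS1' : S1 = Matrix.scalar n (X : F[X]) + S.map Cf := by
    rw [hS1, charmatrix]
    ext i j
    simp [Cf, sub_eq_add_neg]
  have hcomm1 : Commute R1 S1 := by
    rw [hS1']
    have h1 : Commute R1 (Matrix.scalar n (X : F[X])) := by
      unfold Commute SemiconjBy
      rw [Matrix.scalar_commute]
      intro r
      exact Commute.all _ _
    have h2 : Commute R1 (S.map Cf) := by
      unfold Commute SemiconjBy
      rw [hR1, ← Matrix.map_mul, ← Matrix.map_mul, h.eq]
    exact h1.add_right h2
  have hdet1 : S1.det ≠ 0 := by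
    have : S1.det = (-S).charpoly := rfl
    rw [this]
    exact ((-S).charpoly_monic).ne_zero
  let φ : F[X] →+* RatFunc F := algebraMap F[X] (RatFunc F)
  have hφinj : Function.Injective φ := IsFractionRing.injective F[X] (RatFunc F)
  have hdetφ : IsUnit (S1.map φ).det := by
    rw [aux_det_map]
    exact isUnit_iff_ne_zero.mpr (fun hc => hdet1 (hφinj (by rw [hc, map_zero])))
  have hcommφ : Commute (R1.map φ) (S1.map φ) := by
    unfold Commute SemiconjBy
    rw [← Matrix.map_mul, ← Matrix.map_mul, hcomm1.eq]
  have key := aux_det_fromBlocks_of_isUnit (P1.map φ) (Q1.map φ) (R1.map φ) (S1.map φ) hcommφ hdetφ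
  rw [← Matrix.fromBlocks_map, ← Matrix.map_mul, ← Matrix.map_mul, ← Matrix.map_sub _ (map_sub φ),
    aux_det_map, aux_det_map] at key
  have key2 : (fromBlocks P1 Q1 R1 S1).det = (P1 * S1 - Q1 * R1).det := hφinj key
  let ε : F[X] →+* F := Polynomial.evalRingHom 0
  have hmapP : P1.map ε = P := by ext i j; simp [hP1, Cf, ε]
  have hmapQ : Q1.map ε = Q := by ext i j; simp [hQ1, Cf, ε]
  have hmapR : R1.map ε = R := by ext i j; simp [hR1, Cf, ε]
  have hmapS : S1.map ε = S := by
    rw [hS1']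
    ext i j
    by_cases hij : i = j <;> simp [Cf, ε, Matrix.scalar_apply, Matrix.diagonal_apply, hij]
  have := congrArg ε key2
  rw [← aux_det_map ε, ← aux_det_map ε, Matrix.fromBlocks_map, Matrix.map_sub _ (map_sub ε),
    Matrix.map_mul, Matrix.map_mul, hmapP, hmapQ, hmapR, hmapS] at this
  exact this

/-- for a semisimple `A` with no eigenvalues `±1` and `A² − 1`
invertible, the block matrix `M = [[A, 1],[A² − 1, A]]` is invertible; for
commuting bottom blocks the block determinant formula
`det [[P,Q],[R,S]] = det(PS − QR)` holds, and it gives `det M = 1`; moreover `M`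
is conjugate to an element of the form `g·θ(g)⁻¹` where `θ(g) = ω g ω`,
`ω = diag(1, −1)`. -/
theorem stmt_19 (F : Type*) [Field F] [CharZero F] (ν : ℕ) (hν : 1 ≤ ν)
    (A : Matrix (Fin ν) (Fin ν) F)
    (hss : Module.End.IsSemisimple (Matrix.toLin' A))
    (heig : ∀ μ : F, Module.End.HasEigenvalue (Matrix.toLin' A) μ → μ ≠ 1 ∧ μ ≠ -1)
    (hinv : IsUnit (A ^ 2 - 1)) :
    (∀ P Q R S : Matrix (Fin ν) (Fin ν) F, Commute R S →
        (fromBlocks P Q R S).det = (P * S - Q * R).det)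
    ∧ IsUnit (fromBlocks A 1 (A ^ 2 - 1) A)
    ∧ (fromBlocks A 1 (A ^ 2 - 1) A).det = 1
    ∧ ∃ (c g : Matrix (Fin ν ⊕ Fin ν) (Fin ν ⊕ Fin ν) F),
        IsUnit c ∧ IsUnit g ∧
        c * fromBlocks A 1 (A ^ 2 - 1) A * c⁻¹
          = g * (fromBlocks 1 0 0 (-1) * g * fromBlocks 1 0 0 (-1))⁻¹ := by
  have hcomm : Commute (A ^ 2 - 1) A := by
    unfold Commute SemiconjBy; noncomm_ring
  have hdetM : (fromBlocks A 1 (A ^ 2 - 1) A).det = 1 := by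
    rw [aux_det_fromBlocks_comm _ _ _ _ hcomm]
    have : A * A - 1 * (A ^ 2 - 1) = 1 := by noncomm_ring
    rw [this, det_one]
  have hM : IsUnit (fromBlocks A 1 (A ^ 2 - 1) A) := by
    rw [Matrix.isUnit_iff_isUnit_det, hdetM]; exact isUnit_one
  have hg : IsUnit (fromBlocks 1 1 (A - 1) (A + 1) : Matrix (Fin ν ⊕ Fin ν) (Fin ν ⊕ Fin ν) F) := by
    have hfact : fromBlocks (1 : Matrix (Fin ν) (Fin ν) F) 1 (A - 1) (A + 1)
        = fromBlocks 1 0 (A - 1) 1 * fromBlocks 1 1 0 2 := by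
      rw [fromBlocks_multiply]
      have e1 : (A - 1) * 1 + 1 * 2 = A + 1 := by noncomm_ring
      have e2 : (A - 1) * 1 + 1 * 0 = A - 1 := by noncomm_ring
      rw [e1, e2]
      simp
    rw [hfact]
    have h1 : IsUnit (fromBlocks 1 0 (A - 1) 1 : Matrix (Fin ν ⊕ Fin ν) (Fin ν ⊕ Fin ν) F) := by
      rw [Matrix.isUnit_iff_isUnit_det, det_fromBlocks_zero₁₂]
      simp
    have h2 : IsUnit (fromBlocks 1 1 0 2 : Matrix (Fin ν ⊕ Fin ν) (Fin ν ⊕ Fin ν) F) := by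
      rw [Matrix.isUnit_iff_isUnit_det, det_fromBlocks_zero₂₁, det_one, one_mul]
      have : (2 : Matrix (Fin ν) (Fin ν) F) = (2 : F) • 1 := by
        simp [two_smul, one_add_one_eq_two]
      rw [this, det_smul, det_one, mul_one]
      exact ((isUnit_iff_ne_zero.mpr (two_ne_zero : (2:F) ≠ 0)).pow _)
    exact h1.mul h2
  refine ⟨fun P Q R S h => aux_det_fromBlocks_comm P Q R S h, hM, hdetM, 1,
    fromBlocks 1 1 (A - 1) (A + 1), isUnit_one, hg, ?_⟩
  set w : Matrix (Fin ν ⊕ Fin ν) (Fin ν ⊕ Fin ν) F := fromBlocks 1 0 0 (-1) with hwdef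
  set g : Matrix (Fin ν ⊕ Fin ν) (Fin ν ⊕ Fin ν) F := fromBlocks 1 1 (A - 1) (A + 1) with hgdef
  set M : Matrix (Fin ν ⊕ Fin ν) (Fin ν ⊕ Fin ν) F := fromBlocks A 1 (A ^ 2 - 1) A with hMdef
  have hw2 : w * w = 1 := by
    rw [hwdef, fromBlocks_multiply]
    simp
  have hwu : IsUnit w := ⟨⟨w, w, hw2, hw2⟩, rfl⟩
  have hh : IsUnit (w * g * w) := (hwu.mul hg).mul hwu
  have hMh : M * (w * g * w) = g := by
    rw [hwdef, hgdef, hMdef, fromBlocks_multiply, fromBlocks_multiply, fromBlocks_multiply]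
    rw [Matrix.fromBlocks_inj]
    refine ⟨by noncomm_ring, by noncomm_ring, by noncomm_ring, by noncomm_ring⟩
  rw [inv_one, one_mul, mul_one]
  nth_rewrite 1 [← hMh]
  rw [Matrix.mul_assoc, Matrix.mul_nonsing_inv _ ((Matrix.isUnit_iff_isUnit_det _).mp hh), mul_one]
end
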